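/- Define b₁,b₂,b₃ : ℝ → ℝ by b₁(s) = e^{1/s} for s < 0, b₁(s) = e^{-1/(s-2)} for s > 2, b₁(s) = 0 otherwise; b₂(s) = e^{-1/(s(1-s))} for 0 < s < 1, b₂(s) = 0 otherwise; b₃(s) = e^{-1/((s-1)(2-s))} for 1 < s < 2, b₃(s) = 0 otherwise. Let γ : ℝ → 𝕃⁴ be a time-like curve parametrized by proper time admitting a Bishop frame (T,B₁,B₂,B₃) with coefficient functions b₁,b₂,b₃. Then γ does not admit a generalized Bishop frame of type C. -/

import Mathlib

open Set Real

noncomputable section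

/-- The Minkowski form on `ℝ⁴ = 𝕃⁴`: `⟨x,y⟩ = -x₀y₀ + x₁y₁ + x₂y₂ + x₃y₃`. -/
def mink (x y : Fin 4 → ℝ) : ℝ :=
  -(x 0 * y 0) + x 1 * y 1 + x 2 * y 2 + x 3 * y 3

/-- `(T, Z₁, Z₂, Z₃)` is an orthonormal frame along a time-like curve with tangent `T`:
the `Zᵢ` are smooth on `I`, pairwise orthonormal (space-like) and orthogonal to `T`. -/
def OrthFrame (I : Set ℝ) (T Z₁ Z₂ Z₃ : ℝ → Fin 4 → ℝ) : Prop :=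
  ContDiffOn ℝ (⊤ : ℕ∞) Z₁ I ∧ ContDiffOn ℝ (⊤ : ℕ∞) Z₂ I ∧ ContDiffOn ℝ (⊤ : ℕ∞) Z₃ I ∧
  ∀ s ∈ I,
    mink (Z₁ s) (Z₁ s) = 1 ∧ mink (Z₂ s) (Z₂ s) = 1 ∧ mink (Z₃ s) (Z₃ s) = 1 ∧
    mink (Z₁ s) (Z₂ s) = 0 ∧ mink (Z₁ s) (Z₃ s) = 0 ∧ mink (Z₂ s) (Z₃ s) = 0 ∧
    mink (T s) (Z₁ s) = 0 ∧ mink (T s) (Z₂ s) = 0 ∧ mink (T s) (Z₃ s) = 0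

/-- `γ` is a smooth time-like curve parametrized by proper time on `I`. -/
def ProperTime (I : Set ℝ) (γ : ℝ → Fin 4 → ℝ) : Prop :=
  ContDiffOn ℝ (⊤ : ℕ∞) γ I ∧ ∀ s ∈ I, mink (deriv γ s) (deriv γ s) = -1

/-- Three smooth real functions on `I`. -/
def Smooth3 (I : Set ℝ) (x₁ x₂ x₃ : ℝ → ℝ) : Prop :=
  ContDiffOn ℝ (⊤ : ℕ∞) x₁ I ∧ ContDiffOn ℝ (⊤ : ℕ∞) x₂ I ∧ ContDiffOn ℝ (⊤ : ℕ∞) x₃ I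

/-- `γ` admits a generalized Bishop frame of type B. -/
def AdmitsB (I : Set ℝ) (γ : ℝ → Fin 4 → ℝ) : Prop :=
  ∃ (Z₁ Z₂ Z₃ : ℝ → Fin 4 → ℝ) (x₁ x₂ x₃ : ℝ → ℝ),
    OrthFrame I (deriv γ) Z₁ Z₂ Z₃ ∧ Smooth3 I x₁ x₂ x₃ ∧
    ∀ s ∈ I,
      deriv (deriv γ) s = x₁ s • Z₁ s + x₂ s • Z₂ s + x₃ s • Z₃ s ∧
      deriv Z₁ s = x₁ s • deriv γ s ∧
      deriv Z₂ s = x₂ s • deriv γ s ∧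
      deriv Z₃ s = x₃ s • deriv γ s

/-- `γ` admits a generalized Bishop frame of type C. -/
def AdmitsC (I : Set ℝ) (γ : ℝ → Fin 4 → ℝ) : Prop :=
  ∃ (Z₁ Z₂ Z₃ : ℝ → Fin 4 → ℝ) (x₁ x₂ x₃ : ℝ → ℝ),
    OrthFrame I (deriv γ) Z₁ Z₂ Z₃ ∧ Smooth3 I x₁ x₂ x₃ ∧
    ∀ s ∈ I,
      deriv (deriv γ) s = x₁ s • Z₁ s + x₂ s • Z₂ s ∧
      deriv Z₁ s = x₁ s • deriv γ s + x₃ s • Z₃ s ∧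
      deriv Z₂ s = x₂ s • deriv γ s ∧
      deriv Z₃ s = (-(x₃ s)) • Z₁ s

/-- `γ` admits a generalized Bishop frame of type D. -/
def AdmitsD (I : Set ℝ) (γ : ℝ → Fin 4 → ℝ) : Prop :=
  ∃ (Z₁ Z₂ Z₃ : ℝ → Fin 4 → ℝ) (x₁ x₂ x₃ : ℝ → ℝ),
    OrthFrame I (deriv γ) Z₁ Z₂ Z₃ ∧ Smooth3 I x₁ x₂ x₃ ∧
    ∀ s ∈ I,
      deriv (deriv γ) s = x₁ s • Z₁ s ∧
      deriv Z₁ s = x₁ s • deriv γ s + x₂ s • Z₂ s + x₃ s • Z₃ s ∧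
      deriv Z₂ s = (-(x₂ s)) • Z₁ s ∧
      deriv Z₃ s = (-(x₃ s)) • Z₁ s

/-- `γ` admits a generalized Bishop frame of type F. -/
def AdmitsF (I : Set ℝ) (γ : ℝ → Fin 4 → ℝ) : Prop :=
  ∃ (Z₁ Z₂ Z₃ : ℝ → Fin 4 → ℝ) (x₁ x₂ x₃ : ℝ → ℝ),
    OrthFrame I (deriv γ) Z₁ Z₂ Z₃ ∧ Smooth3 I x₁ x₂ x₃ ∧
    ∀ s ∈ I,
      deriv (deriv γ) s = x₁ s • Z₁ s ∧
      deriv Z₁ s = x₁ s • deriv γ s + x₂ s • Z₂ s ∧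
      deriv Z₂ s = (-(x₂ s)) • Z₁ s + x₃ s • Z₃ s ∧
      deriv Z₃ s = (-(x₃ s)) • Z₂ s

/-- The first Bishop curvature of Proposition `typeC`. -/
def b₁ex : ℝ → ℝ := fun s =>
  if s < 0 then Real.exp (1 / s)
  else if 2 < s then Real.exp (-(1 / (s - 2)))
  else 0

/-- The second Bishop curvature of Proposition `typeC`. -/
def b₂ex : ℝ → ℝ := fun s =>
  if 0 < s ∧ s < 1 then Real.exp (-(1 / (s * (1 - s)))) else 0

/-- The third Bishop curvature of Proposition `typeC`. -/
def b₃ex : ℝ → ℝ := fun s =>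
  if 1 < s ∧ s < 2 then Real.exp (-(1 / ((s - 1) * (2 - s)))) else 0

/-!
The Bishop coordinates `c = (⟨Z₂, Bᵢ⟩)ᵢ` of `Z₂` are constant, since `Z₂'` and every `Bᵢ'` are
multiples of `T`, which is orthogonal to `Z₂` and to the `Bᵢ`. The coordinates
`a(s) = (⟨Z₃, Bᵢ⟩)ᵢ` of `Z₃` form a unit vector orthogonal to `c` and, because `T' ⊥ Z₃`, to
`(b₁, b₂, b₃)(s)`. Each `bᵢ` is positive exactly where the other two vanish, so by continuity
`a(1)`, `a(2)`, `a(0)` are `±e₁`, `±e₂`, `±e₃`. Hence `c = 0`, contradicting `|c| = 1`.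
-/

open Matrix

lemma mink_comm (x y : Fin 4 → ℝ) : mink x y = mink y x := by
  simp only [mink]; ring

@[simp] lemma mink_add_right (x y z : Fin 4 → ℝ) : mink x (y + z) = mink x y + mink x z := by
  simp only [mink, Pi.add_apply]; ring

@[simp] lemma mink_smul_right (r : ℝ) (x y : Fin 4 → ℝ) : mink x (r • y) = r * mink x y := by
  simp only [mink, Pi.smul_apply, smul_eq_mul]; ring

@[simp] lemma mink_add_left (x y z : Fin 4 → ℝ) : mink (x + y) z = mink x z + mink y z := by
  rw [mink_comm, mink_add_right, mink_comm z, mink_comm z]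

@[simp] lemma mink_smul_left (r : ℝ) (x y : Fin 4 → ℝ) : mink (r • x) y = r * mink x y := by
  rw [mink_comm, mink_smul_right, mink_comm]

def minkMetric : Matrix (Fin 4) (Fin 4) ℝ := diagonal ![-1, 1, 1, 1]

lemma mink_eq_dotProduct (x y : Fin 4 → ℝ) : mink x y = x ⬝ᵥ (minkMetric *ᵥ y) := by
  simp [mink, minkMetric, dotProduct, Fin.sum_univ_four, mulVec_diagonal]

lemma mink_minkMetric_mulVec (v w : Fin 4 → ℝ) :
    mink (minkMetric *ᵥ v) (minkMetric *ᵥ w) = mink v w := by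
  simp [mink, minkMetric, mulVec_diagonal]

lemma minkMetric_mul_self : minkMetric * minkMetric = 1 := by
  rw [minkMetric, diagonal_mul_diagonal, ← diagonal_one]
  congr 1; ext i; fin_cases i <;> simp

lemma mul_minkMetric_mul_transpose_apply (M : Matrix (Fin 4) (Fin 4) ℝ) (i j : Fin 4) :
    (M * minkMetric * Mᵀ) i j = mink (fun k => M i k) (fun k => M j k) := by
  simp [mink, minkMetric, Matrix.mul_apply, Fin.sum_univ_four]

-- A one-sided inverse of a square matrix is two-sided: orthonormal rows give orthonormal columns.
lemma transpose_mul_minkMetric_mul_eq {M : Matrix (Fin 4) (Fin 4) ℝ}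
    (h : M * minkMetric * Mᵀ = minkMetric) : Mᵀ * minkMetric * M = minkMetric := by
  have h' : (minkMetric * Mᵀ * minkMetric) * M = 1 := mul_eq_one_comm.mp <| by
    rw [← Matrix.mul_assoc, ← Matrix.mul_assoc, h, minkMetric_mul_self]
  calc Mᵀ * minkMetric * M = minkMetric * ((minkMetric * Mᵀ * minkMetric) * M) := by
        simp only [← Matrix.mul_assoc, minkMetric_mul_self, Matrix.one_mul]
    _ = minkMetric := by rw [h', Matrix.mul_one]

lemma mink_mulVec_mulVec {M : Matrix (Fin 4) (Fin 4) ℝ}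
    (h : Mᵀ * minkMetric * M = minkMetric) (v w : Fin 4 → ℝ) :
    mink (M *ᵥ v) (M *ᵥ w) = mink v w := by
  rw [mink_eq_dotProduct, mink_eq_dotProduct, mulVec_mulVec, dotProduct_mulVec, vecMul_mulVec,
    ← dotProduct_mulVec, ← Matrix.mul_assoc, h]

lemma mulVec_minkMetric_mulVec_apply (M : Matrix (Fin 4) (Fin 4) ℝ) (v : Fin 4 → ℝ) (i : Fin 4) :
    (M *ᵥ (minkMetric *ᵥ v)) i = mink (fun k => M i k) v := by
  rw [mink_eq_dotProduct]; rfl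

lemma mink_eq_of_orthonormal (T B₁ B₂ B₃ : Fin 4 → ℝ)
    (hTT : mink T T = -1) (h11 : mink B₁ B₁ = 1) (h22 : mink B₂ B₂ = 1) (h33 : mink B₃ B₃ = 1)
    (h12 : mink B₁ B₂ = 0) (h13 : mink B₁ B₃ = 0) (h23 : mink B₂ B₃ = 0)
    (hT1 : mink T B₁ = 0) (hT2 : mink T B₂ = 0) (hT3 : mink T B₃ = 0) (v w : Fin 4 → ℝ) :
    mink v w = -(mink T v * mink T w) + mink B₁ v * mink B₁ w + mink B₂ v * mink B₂ w
      + mink B₃ v * mink B₃ w := by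
  set M : Matrix (Fin 4) (Fin 4) ℝ := of ![T, B₁, B₂, B₃]
  have hM : M * minkMetric * Mᵀ = minkMetric := by
    ext i j
    rw [mul_minkMetric_mul_transpose_apply]
    fin_cases i <;> fin_cases j <;>
      simp [M, minkMetric, mink_comm B₁ T, mink_comm B₂ T, mink_comm B₃ T, mink_comm B₂ B₁,
        mink_comm B₃ B₁, mink_comm B₃ B₂, *]
  rw [← mink_minkMetric_mulVec v w, ← mink_mulVec_mulVec (transpose_mul_minkMetric_mul_eq hM)]
  rw [mink]
  simp [mulVec_minkMetric_mulVec_apply, M]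

lemma OrthFrame.mink_eq_sum_of_orthogonal {I : Set ℝ} {T B₁ B₂ B₃ : ℝ → Fin 4 → ℝ}
    (hB : OrthFrame I T B₁ B₂ B₃) {s : ℝ} (hs : s ∈ I) (hTT : mink (T s) (T s) = -1)
    {v : Fin 4 → ℝ} (hv : mink (T s) v = 0) (w : Fin 4 → ℝ) :
    mink v w = mink (B₁ s) v * mink (B₁ s) w + mink (B₂ s) v * mink (B₂ s) w
      + mink (B₃ s) v * mink (B₃ s) w := by
  obtain ⟨-, -, -, hB⟩ := hB
  obtain ⟨h11, h22, h33, h12, h13, h23, hT1, hT2, hT3⟩ := hB s hs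
  rw [mink_eq_of_orthonormal _ _ _ _ hTT h11 h22 h33 h12 h13 h23 hT1 hT2 hT3, hv]
  ring

lemma HasDerivAt.mink {f g : ℝ → Fin 4 → ℝ} {f' g' : Fin 4 → ℝ} {s : ℝ}
    (hf : HasDerivAt f f' s) (hg : HasDerivAt g g' s) :
    HasDerivAt (fun t => mink (f t) (g t)) (mink f' (g s) + mink (f s) g') s := by
  have h i := (hasDerivAt_pi.mp hf i).fun_mul (hasDerivAt_pi.mp hg i)
  exact ((((h 0).fun_neg.fun_add (h 1)).fun_add (h 2)).fun_add (h 3)).congr_deriv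
    (by simp only [_root_.mink]; ring)

lemma Continuous.mink {f g : ℝ → Fin 4 → ℝ} (hf : Continuous f) (hg : Continuous g) :
    Continuous (fun t => mink (f t) (g t)) := by
  unfold _root_.mink; fun_prop

lemma mink_eq_of_deriv_eq_smul {T Z B : ℝ → Fin 4 → ℝ} {p q : ℝ → ℝ}
    (hZ : Differentiable ℝ Z) (hB : Differentiable ℝ B)
    (hZ' : ∀ s, deriv Z s = p s • T s) (hB' : ∀ s, deriv B s = q s • T s)
    (hTZ : ∀ s, mink (T s) (Z s) = 0) (hTB : ∀ s, mink (T s) (B s) = 0) (s t : ℝ) :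
    mink (Z s) (B s) = mink (Z t) (B t) := by
  have hderiv u : HasDerivAt (fun t => mink (Z t) (B t)) 0 u := by
    convert (hZ u).hasDerivAt.mink (hB u).hasDerivAt using 1
    rw [hZ', hB', mink_smul_left, mink_smul_right, mink_comm (Z u), hTZ, hTB]; ring
  exact is_const_of_deriv_eq_zero (fun u => (hderiv u).differentiableAt)
    (fun u => (hderiv u).deriv) s t

lemma b₁ex_pos_of_neg {s : ℝ} (hs : s < 0) : 0 < b₁ex s := by
  simp only [b₁ex, if_pos hs]; positivity

lemma b₁ex_pos_of_two_lt {s : ℝ} (hs : 2 < s) : 0 < b₁ex s := by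
  simp only [b₁ex, if_neg (by linarith : ¬ s < 0), if_pos hs]; positivity

lemma b₁ex_eq_zero {s : ℝ} (hs : s ∈ Icc 0 2) : b₁ex s = 0 := by
  simp [b₁ex, not_lt.2 hs.1, not_lt.2 hs.2]

lemma b₂ex_pos {s : ℝ} (hs : s ∈ Ioo 0 1) : 0 < b₂ex s := by
  simp only [b₂ex, if_pos (show 0 < s ∧ s < 1 from hs)]; positivity

lemma b₂ex_eq_zero {s : ℝ} (hs : s ∉ Ioo 0 1) : b₂ex s = 0 := by
  simp only [b₂ex, if_neg (show ¬ (0 < s ∧ s < 1) from hs)]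

lemma b₃ex_pos {s : ℝ} (hs : s ∈ Ioo 1 2) : 0 < b₃ex s := by
  simp only [b₃ex, if_pos (show 1 < s ∧ s < 2 from hs)]; positivity

lemma b₃ex_eq_zero {s : ℝ} (hs : s ∉ Ioo 1 2) : b₃ex s = 0 := by
  simp only [b₃ex, if_neg (show ¬ (1 < s ∧ s < 2) from hs)]

lemma eqOn_zero_closure_of_mul_eq_zero {a b : ℝ → ℝ} {S : Set ℝ} (ha : Continuous a)
    (hb : ∀ s ∈ S, 0 < b s) (hab : ∀ s ∈ S, b s * a s = 0) : EqOn a 0 (closure S) :=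
  EqOn.closure (fun s hs => (mul_eq_zero.1 (hab s hs)).resolve_left (hb s hs).ne') ha
    continuous_const

lemma eq_zero_at_of_bex_orthogonal {a₁ a₂ a₃ : ℝ → ℝ}
    (ha₁ : Continuous a₁) (ha₂ : Continuous a₂) (ha₃ : Continuous a₃)
    (h : ∀ s, b₁ex s * a₁ s + b₂ex s * a₂ s + b₃ex s * a₃ s = 0) :
    a₁ 0 = 0 ∧ a₂ 0 = 0 ∧ a₂ 1 = 0 ∧ a₃ 1 = 0 ∧ a₁ 2 = 0 ∧ a₃ 2 = 0 := by
  have hIio : EqOn a₁ 0 (closure (Iio 0)) :=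
    eqOn_zero_closure_of_mul_eq_zero ha₁ (fun _ => b₁ex_pos_of_neg) fun s (hs : s < 0) => by
      simpa [b₂ex_eq_zero (notMem_Ioo_of_le hs.le),
        b₃ex_eq_zero (notMem_Ioo_of_le (by linarith))] using h s
  have hIoi : EqOn a₁ 0 (closure (Ioi 2)) :=
    eqOn_zero_closure_of_mul_eq_zero ha₁ (fun _ => b₁ex_pos_of_two_lt) fun s (hs : 2 < s) => by
      simpa [b₂ex_eq_zero (notMem_Ioo_of_ge (by linarith)),
        b₃ex_eq_zero (notMem_Ioo_of_ge hs.le)] using h s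
  have hIoo₀₁ : EqOn a₂ 0 (closure (Ioo 0 1)) :=
    eqOn_zero_closure_of_mul_eq_zero ha₂ (fun _ => b₂ex_pos) fun s hs => by
      simpa [b₁ex_eq_zero ⟨hs.1.le, by linarith [hs.2]⟩,
        b₃ex_eq_zero (notMem_Ioo_of_le hs.2.le)] using h s
  have hIoo₁₂ : EqOn a₃ 0 (closure (Ioo 1 2)) :=
    eqOn_zero_closure_of_mul_eq_zero ha₃ (fun _ => b₃ex_pos) fun s hs => by
      simpa [b₁ex_eq_zero ⟨by linarith [hs.1], hs.2.le⟩,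
        b₂ex_eq_zero (notMem_Ioo_of_ge hs.1.le)] using h s
  rw [closure_Iio] at hIio
  rw [closure_Ioi] at hIoi
  rw [closure_Ioo zero_ne_one] at hIoo₀₁
  rw [closure_Ioo (by norm_num : (1 : ℝ) ≠ 2)] at hIoo₁₂
  exact ⟨hIio self_mem_Iic, hIoo₀₁ (left_mem_Icc.2 zero_le_one),
    hIoo₀₁ (right_mem_Icc.2 zero_le_one), hIoo₁₂ (left_mem_Icc.2 one_le_two), hIoi self_mem_Ici,
    hIoo₁₂ (right_mem_Icc.2 one_le_two)⟩

lemma eq_zero_of_orthogonal_to_unit_bex_orthogonal {a₁ a₂ a₃ : ℝ → ℝ} {c₁ c₂ c₃ : ℝ}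
    (ha₁ : Continuous a₁) (ha₂ : Continuous a₂) (ha₃ : Continuous a₃)
    (hunit : ∀ s, a₁ s ^ 2 + a₂ s ^ 2 + a₃ s ^ 2 = 1)
    (hb : ∀ s, b₁ex s * a₁ s + b₂ex s * a₂ s + b₃ex s * a₃ s = 0)
    (hc : ∀ s, a₁ s * c₁ + a₂ s * c₂ + a₃ s * c₃ = 0) :
    c₁ = 0 ∧ c₂ = 0 ∧ c₃ = 0 := by
  obtain ⟨h₁0, h₂0, h₂1, h₃1, h₁2, h₃2⟩ := eq_zero_at_of_bex_orthogonal ha₁ ha₂ ha₃ hb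
  refine ⟨?_, ?_, ?_⟩
  · have hn := hunit 1
    have ho := hc 1
    rw [h₂1, h₃1] at hn ho
    linear_combination (-c₁) * hn + a₁ 1 * ho
  · have hn := hunit 2
    have ho := hc 2
    rw [h₁2, h₃2] at hn ho
    linear_combination (-c₂) * hn + a₂ 2 * ho
  · have hn := hunit 0
    have ho := hc 0
    rw [h₁0, h₂0] at hn ho
    linear_combination (-c₃) * hn + a₃ 0 * ho

/-- a time-like curve parametrized by proper time whose Bishop frame has
the coefficient functions `b₁ex, b₂ex, b₃ex` does not admit a generalized Bishop frame of
type C. -/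
theorem stmt_18 (γ : ℝ → Fin 4 → ℝ) (hγ : ProperTime Set.univ γ)
    (B₁ B₂ B₃ : ℝ → Fin 4 → ℝ)
    (hB : OrthFrame Set.univ (deriv γ) B₁ B₂ B₃)
    (hBEq : ∀ s : ℝ,
      deriv (deriv γ) s = b₁ex s • B₁ s + b₂ex s • B₂ s + b₃ex s • B₃ s ∧
      deriv B₁ s = b₁ex s • deriv γ s ∧
      deriv B₂ s = b₂ex s • deriv γ s ∧
      deriv B₃ s = b₃ex s • deriv γ s) :
    ¬ AdmitsC Set.univ γ := by
  rintro ⟨Z₁, Z₂, Z₃, x₁, x₂, x₃, ⟨-, hZ₂, hZ₃, hZ⟩, -, hC⟩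
  choose _ hZ₂₂ hZ₃₃ _ hZ₁₃ hZ₂₃ _ hTZ₂ hTZ₃ using fun s => hZ s trivial
  choose _ _ _ _ _ _ hTB₁ hTB₂ hTB₃ using fun s => hB.2.2.2 s trivial
  have hdiff {f : ℝ → Fin 4 → ℝ} (hf : ContDiffOn ℝ (⊤ : ℕ∞) f univ) : Differentiable ℝ f :=
    (contDiffOn_univ.1 hf).differentiable (by simp)
  have hparseval {s : ℝ} {v : Fin 4 → ℝ} :=
    hB.mink_eq_sum_of_orthogonal (mem_univ s) (hγ.2 s trivial) (v := v)
  have hZ₂_coord {B : ℝ → Fin 4 → ℝ} {b : ℝ → ℝ} (hB : ContDiffOn ℝ (⊤ : ℕ∞) B univ)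
      (hB' : ∀ s, deriv B s = b s • deriv γ s) (hTB : ∀ s, mink (deriv γ s) (B s) = 0) (s : ℝ) :
      mink (B s) (Z₂ s) = mink (B 0) (Z₂ 0) :=
    mink_eq_of_deriv_eq_smul (hdiff hB) (hdiff hZ₂) hB' (hC · trivial |>.2.2.1) hTB hTZ₂ s 0
  have hZ₃_coord_cont {B : ℝ → Fin 4 → ℝ} (hB : ContDiffOn ℝ (⊤ : ℕ∞) B univ) :=
    (hdiff hB).continuous.mink (hdiff hZ₃).continuous
  have hT'Z₃ s : b₁ex s * mink (B₁ s) (Z₃ s) + b₂ex s * mink (B₂ s) (Z₃ s)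
      + b₃ex s * mink (B₃ s) (Z₃ s) = 0 := by
    have h := congrArg (mink · (Z₃ s)) ((hBEq s).1.symm.trans (hC s trivial).1)
    simpa only [mink_add_left, mink_smul_left, hZ₁₃, hZ₂₃, mul_zero, add_zero] using h
  obtain ⟨hc₁, hc₂, hc₃⟩ := eq_zero_of_orthogonal_to_unit_bex_orthogonal
    (c₁ := mink (B₁ 0) (Z₂ 0)) (c₂ := mink (B₂ 0) (Z₂ 0)) (c₃ := mink (B₃ 0) (Z₂ 0))
    (hZ₃_coord_cont hB.1) (hZ₃_coord_cont hB.2.1) (hZ₃_coord_cont hB.2.2.1)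
    (fun s => by rw [← hZ₃₃ s, hparseval (hTZ₃ s)]; ring) hT'Z₃
    (fun s => by
      rw [← hZ₂_coord hB.1 (hBEq · |>.2.1) hTB₁ s, ← hZ₂_coord hB.2.1 (hBEq · |>.2.2.1) hTB₂ s,
        ← hZ₂_coord hB.2.2.1 (hBEq · |>.2.2.2) hTB₃ s, ← hparseval (hTZ₃ s), mink_comm, hZ₂₃])
  have h := hZ₂₂ 0
  rw [hparseval (hTZ₂ 0), hc₁, hc₂, hc₃] at h
  norm_num at h
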